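/- Let d ≥ 1, let h : {−1,1}^d → ℝ satisfy 0 ≤ h(y) ≤ d for all y, let M ≥ 2d, define f(x) = min(M, h(round(x)) + 2M·g(x)), and let λ > 0. Then for every hypercube vertex y* ∈ {−1,1}^d, ∫_{B(y*,1/4)} exp(−λ f(x)) dx = exp(−λ h(y*)) · ∫_{B(0,1/4)} exp(−2Mλ‖z‖) dz. Consequently, for every y* ∈ {−1,1}^d, (∫_{B(y*,1/4)} exp(−λ f(x)) dx) / (Σ_{y ∈ {−1,1}^d} ∫_{B(y,1/4)} exp(−λ f(x)) dx) = exp(−λ h(y*)) / (Σ_{y ∈ {−1,1}^d} exp(−λ h(y))); that is, the Gibbs measure of f conditioned on the union of the radius-1/4 balls around hypercube vertices assigns to the ball around y* exactly the discrete Gibbs probability of y* under h. -/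

import Mathlib

open Real MeasureTheory

/-- The coordinatewise sign vector: `round(x)_i = 1` if `x_i ≥ 0` and `-1` otherwise. -/
noncomputable def rnd {d : ℕ} (x : EuclideanSpace ℝ (Fin d)) : EuclideanSpace ℝ (Fin d) :=
  WithLp.toLp 2 (fun i => if 0 ≤ x i then 1 else -1)

/-- The continuous extension `f(x) = min(M, h(round x) + 2M·‖x - round x‖)` of a
function `h` on the hypercube vertices. -/
noncomputable def fExt {d : ℕ} (h : EuclideanSpace ℝ (Fin d) → ℝ) (M : ℝ)
    (x : EuclideanSpace ℝ (Fin d)) : ℝ :=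
  min M (h (rnd x) + 2 * M * ‖x - rnd x‖)

/-- The hypercube vertex corresponding to a sign pattern `s : Fin d → Bool`. -/
noncomputable def vtx {d : ℕ} (s : Fin d → Bool) : EuclideanSpace ℝ (Fin d) :=
  WithLp.toLp 2 (fun i => if s i then 1 else -1)

/-!
On the ball `B(y*, 1/4)` the sign vector is constantly `y*`, and the cap `M` is never reached
because `h(y*) + 2M/4 ≤ d + M/2 ≤ M`. So there `f(x) = h(y*) + 2M‖x - y*‖`, the integrand
factors as `exp(-λ h(y*)) · exp(-2Mλ‖x - y*‖)`, and translating the second factor to the origin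
gives the first claim. The remaining integral is positive and independent of `y*`, so it
cancels from the ratio.
-/

open Metric

section BallIntegrals

variable {E G : Type*} [NormedAddCommGroup E] [MeasurableSpace E] [BorelSpace E]
  [NormedAddCommGroup G] [NormedSpace ℝ G]

lemma setIntegral_closedBall_comp_sub (μ : Measure E) [μ.IsAddLeftInvariant] (g : E → G)
    (c : E) (r : ℝ) :
    ∫ x in closedBall c r, g (x - c) ∂μ = ∫ z in closedBall 0 r, g z ∂μ := by
  have hpre : (c + ·) ⁻¹' closedBall c r = closedBall (0 : E) r := by
    rw [preimage_add_closedBall, sub_self]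
  rw [← (measurePreserving_add_left μ c).setIntegral_preimage_emb
    (MeasurableEquiv.addLeft c).measurableEmbedding, hpre]
  simp only [add_sub_cancel_left]

lemma setIntegral_closedBall_pos_of_continuous [ProperSpace E] (μ : Measure E)
    [μ.IsOpenPosMeasure] [IsFiniteMeasureOnCompacts μ] {f : E → ℝ} (hf : Continuous f)
    (hpos : ∀ x, 0 < f x) (c : E) {r : ℝ} (hr : 0 < r) :
    0 < ∫ x in closedBall c r, f x ∂μ := by
  have hint : IntegrableOn f (closedBall c r) μ :=
    hf.continuousOn.integrableOn_compact (isCompact_closedBall c r)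
  rw [setIntegral_pos_iff_support_of_nonneg_ae
    (Filter.Eventually.of_forall fun x => (hpos x).le) hint,
    Function.support_eq_univ fun x => (hpos x).ne', Set.univ_inter]
  exact measure_closedBall_pos μ c hr

end BallIntegrals

section Hypercube

variable {d : ℕ}

lemma vtx_apply_eq_one_or_neg_one (s : Fin d → Bool) (i : Fin d) :
    vtx s i = 1 ∨ vtx s i = -1 := by
  by_cases hs : s i <;> simp [vtx, hs]

lemma rnd_eq_vtx_of_dist_lt_one {s : Fin d → Bool} {x : EuclideanSpace ℝ (Fin d)}
    (hx : dist x (vtx s) < 1) : rnd x = vtx s := by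
  ext i
  have hi : |x i - vtx s i| < 1 := (PiLp.dist_apply_le x (vtx s) i).trans_lt hx
  by_cases hs : s i
  · have : 0 ≤ x i := by
      simp only [vtx, hs, if_true] at hi
      linarith [(abs_lt.1 hi).1]
    simp [rnd, vtx, hs, this]
  · have : ¬ 0 ≤ x i := by
      simp only [vtx, hs, Bool.false_eq_true, if_false] at hi
      linarith [(abs_lt.1 hi).2]
    simp [rnd, vtx, hs, this]

lemma fExt_eq_of_dist_le {h : EuclideanSpace ℝ (Fin d) → ℝ} {M r : ℝ} {s : Fin d → Bool}
    {x : EuclideanSpace ℝ (Fin d)} (hr : r < 1) (hM : 0 ≤ M)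
    (hcap : h (vtx s) + 2 * M * r ≤ M) (hx : dist x (vtx s) ≤ r) :
    fExt h M x = h (vtx s) + 2 * M * dist x (vtx s) := by
  rw [fExt, rnd_eq_vtx_of_dist_lt_one (hx.trans_lt hr), ← dist_eq_norm]
  exact min_eq_right (le_trans (by gcongr) hcap)

lemma setIntegral_closedBall_vtx_exp_fExt (h : EuclideanSpace ℝ (Fin d) → ℝ) {M r : ℝ}
    (lam : ℝ) (s : Fin d → Bool) (hr : r < 1) (hM : 0 ≤ M)
    (hcap : h (vtx s) + 2 * M * r ≤ M) :
    ∫ x in closedBall (vtx s) r, exp (-(lam * fExt h M x)) =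
      exp (-(lam * h (vtx s))) *
        ∫ z in closedBall (0 : EuclideanSpace ℝ (Fin d)) r, exp (-(2 * M * lam * ‖z‖)) := by
  have hfactor : ∀ x ∈ closedBall (vtx s) r, exp (-(lam * fExt h M x)) =
      exp (-(lam * h (vtx s))) * exp (-(2 * M * lam * ‖x - vtx s‖)) := fun x hx => by
    rw [fExt_eq_of_dist_le hr hM hcap hx, ← exp_add, dist_eq_norm]
    ring_nf
  rw [setIntegral_congr_fun measurableSet_closedBall hfactor, integral_const_mul,
    setIntegral_closedBall_comp_sub volume (fun z => exp (-(2 * M * lam * ‖z‖)))]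

end Hypercube

theorem gibbs_ball_mass_factors_general (d : ℕ)
    (h : EuclideanSpace ℝ (Fin d) → ℝ)
    (hh : ∀ y : EuclideanSpace ℝ (Fin d), (∀ i, y i = 1 ∨ y i = -1) →
      0 ≤ h y ∧ h y ≤ (d : ℝ))
    (M : ℝ) (hM : 2 * (d : ℝ) ≤ M)
    (lam : ℝ) :
    ∀ sstar : Fin d → Bool,
      (∫ x in Metric.closedBall (vtx sstar) (1 / 4),
          Real.exp (-(lam * fExt h M x))) =
        Real.exp (-(lam * h (vtx sstar))) *
          ∫ z in Metric.closedBall (0 : EuclideanSpace ℝ (Fin d)) (1 / 4),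
            Real.exp (-(2 * M * lam * ‖z‖)) ∧
      (∫ x in Metric.closedBall (vtx sstar) (1 / 4),
          Real.exp (-(lam * fExt h M x))) /
          (∑ s : Fin d → Bool,
            ∫ x in Metric.closedBall (vtx s) (1 / 4),
              Real.exp (-(lam * fExt h M x))) =
        Real.exp (-(lam * h (vtx sstar))) /
          (∑ s : Fin d → Bool, Real.exp (-(lam * h (vtx s)))) := by
  have hM0 : 0 ≤ M := le_trans (by positivity) hM
  have hmass : ∀ s : Fin d → Bool,
      ∫ x in closedBall (vtx s) (1 / 4), exp (-(lam * fExt h M x)) =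
        exp (-(lam * h (vtx s))) *
          ∫ z in closedBall (0 : EuclideanSpace ℝ (Fin d)) (1 / 4),
            exp (-(2 * M * lam * ‖z‖)) := fun s =>
    setIntegral_closedBall_vtx_exp_fExt h lam s (by norm_num) hM0
      (by linarith [(hh (vtx s) (vtx_apply_eq_one_or_neg_one s)).2])
  have hC : 0 < ∫ z in closedBall (0 : EuclideanSpace ℝ (Fin d)) (1 / 4),
      exp (-(2 * M * lam * ‖z‖)) :=
    setIntegral_closedBall_pos_of_continuous volume (by fun_prop) (fun _ => exp_pos _) 0
      (by norm_num)
  intro sstar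
  refine ⟨hmass sstar, ?_⟩
  simp_rw [hmass, ← Finset.sum_mul]
  exact mul_div_mul_right _ _ hC.ne'

/-- The Gibbs mass of `f` on the radius-`1/4` ball around a hypercube
vertex `y*` factors as `exp(-λ h(y*))` times a universal integral, and hence the
Gibbs measure of `f` conditioned on the union of these balls reproduces exactly the
discrete Gibbs distribution of `h`. -/
theorem gibbs_ball_mass_factors (d : ℕ) (hd : 1 ≤ d)
    (h : EuclideanSpace ℝ (Fin d) → ℝ)
    (hh : ∀ y : EuclideanSpace ℝ (Fin d), (∀ i, y i = 1 ∨ y i = -1) →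
      0 ≤ h y ∧ h y ≤ (d : ℝ))
    (M : ℝ) (hM : 2 * (d : ℝ) ≤ M)
    (lam : ℝ) (hlam : 0 < lam) :
    ∀ sstar : Fin d → Bool,
      (∫ x in Metric.closedBall (vtx sstar) (1 / 4),
          Real.exp (-(lam * fExt h M x))) =
        Real.exp (-(lam * h (vtx sstar))) *
          ∫ z in Metric.closedBall (0 : EuclideanSpace ℝ (Fin d)) (1 / 4),
            Real.exp (-(2 * M * lam * ‖z‖)) ∧
      (∫ x in Metric.closedBall (vtx sstar) (1 / 4),
          Real.exp (-(lam * fExt h M x))) /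
          (∑ s : Fin d → Bool,
            ∫ x in Metric.closedBall (vtx s) (1 / 4),
              Real.exp (-(lam * fExt h M x))) =
        Real.exp (-(lam * h (vtx sstar))) /
          (∑ s : Fin d → Bool, Real.exp (-(lam * h (vtx s)))) :=
  gibbs_ball_mass_factors_general d h hh M hM lam
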